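/- A theory T (a set of sequents closed under the rules of the calculus ST^H) is prime (i.e., Γ ▷ Δ ∈ T with Γ ∪ Δ ≠ ∅ implies γ ▷ ∅ ∈ T for some γ ∈ Γ or ∅ ▷ δ ∈ T for some δ ∈ Δ) if and only if S₁ ⊔ S₂ ∈ T implies S₁ ∈ T or S₂ ∈ T, where (Γ₁ ▷ Δ₁) ⊔ (Γ₂ ▷ Δ₂) := (Γ₁ ∪ Γ₂ ▷ Δ₁ ∪ Δ₂). -/

import Mathlib

mutual
/-- Terms over the Henkin expansion of a first-order signature: variables,
function symbols applied to lists of terms, and Henkin witness constants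
`w(∀x φ)` and `w(∃x φ)`. -/
inductive HTerm : Type
  | var : ℕ → HTerm
  | func : ℕ → List HTerm → HTerm
  | wAll : ℕ → HForm → HTerm
  | wEx : ℕ → HForm → HTerm
/-- Formulas over the Henkin expansion of a first-order signature. -/
inductive HForm : Type
  | rel : ℕ → List HTerm → HForm
  | neg : HForm → HForm
  | conj : HForm → HForm → HForm
  | disj : HForm → HForm → HForm
  | all : ℕ → HForm → HForm
  | ex : ℕ → HForm → HForm
end

mutual
/-- Substitution of a term for a variable in a Henkin term. -/
def HTerm.subst (x : ℕ) (t : HTerm) : HTerm → HTerm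
  | .var y => if y = x then t else .var y
  | .func f ts => .func f (ts.attach.map (fun s => HTerm.subst x t s.1))
  | .wAll y φ => .wAll y (if y = x then φ else HForm.subst x t φ)
  | .wEx y φ => .wEx y (if y = x then φ else HForm.subst x t φ)
termination_by s => sizeOf s
decreasing_by
  all_goals simp_wf
  all_goals first
    | (have := List.sizeOf_lt_of_mem s.2; omega)
    | omega
/-- Substitution of a term for a variable in a Henkin formula
(not substituting under a binder for the same variable). -/
def HForm.subst (x : ℕ) (t : HTerm) : HForm → HForm
  | .rel r ts => .rel r (ts.attach.map (fun s => HTerm.subst x t s.1))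
  | .neg φ => .neg (HForm.subst x t φ)
  | .conj φ ψ => .conj (HForm.subst x t φ) (HForm.subst x t ψ)
  | .disj φ ψ => .disj (HForm.subst x t φ) (HForm.subst x t ψ)
  | .all y φ => .all y (if y = x then φ else HForm.subst x t φ)
  | .ex y φ => .ex y (if y = x then φ else HForm.subst x t φ)
termination_by φ => sizeOf φ
decreasing_by
  all_goals simp_wf
  all_goals first
    | (have := List.sizeOf_lt_of_mem s.2; omega)
    | omega
end

noncomputable instance : DecidableEq HForm := Classical.decEq _

/-- A sequent: a pair of finite sets of Henkin formulas. -/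
abbrev HSeq : Type := Finset HForm × Finset HForm

/-- Componentwise union of sequents. -/
noncomputable def HSeq.squnion (S₁ S₂ : HSeq) : HSeq := (S₁.1 ∪ S₂.1, S₁.2 ∪ S₂.2)

/-- Derivability in the calculus `ST^H`: identity, weakening, invertible rules
for the connectives, witness introduction/elimination rules for the Henkin
constants, and the (invertible) quantifier rules via Henkin witnesses. -/
inductive STH (X : Set HSeq) : HSeq → Prop
  | hyp {S} : S ∈ X → STH X S
  | id (φ : HForm) : STH X ({φ}, {φ})
  | wl {Γ Δ} (φ) : STH X (Γ, Δ) → STH X (insert φ Γ, Δ)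
  | wr {Γ Δ} (φ) : STH X (Γ, Δ) → STH X (Γ, insert φ Δ)
  | andL {Γ Δ φ ψ} : STH X (insert φ (insert ψ Γ), Δ) → STH X (insert (.conj φ ψ) Γ, Δ)
  | andLinv {Γ Δ φ ψ} : STH X (insert (.conj φ ψ) Γ, Δ) → STH X (insert φ (insert ψ Γ), Δ)
  | andR {Γ Δ φ ψ} : STH X (Γ, insert φ Δ) → STH X (Γ, insert ψ Δ) →
      STH X (Γ, insert (.conj φ ψ) Δ)
  | andRinv₁ {Γ Δ φ ψ} : STH X (Γ, insert (.conj φ ψ) Δ) → STH X (Γ, insert φ Δ)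
  | andRinv₂ {Γ Δ φ ψ} : STH X (Γ, insert (.conj φ ψ) Δ) → STH X (Γ, insert ψ Δ)
  | orR {Γ Δ φ ψ} : STH X (Γ, insert φ (insert ψ Δ)) → STH X (Γ, insert (.disj φ ψ) Δ)
  | orRinv {Γ Δ φ ψ} : STH X (Γ, insert (.disj φ ψ) Δ) → STH X (Γ, insert φ (insert ψ Δ))
  | orL {Γ Δ φ ψ} : STH X (insert φ Γ, Δ) → STH X (insert ψ Γ, Δ) →
      STH X (insert (.disj φ ψ) Γ, Δ)
  | orLinv₁ {Γ Δ φ ψ} : STH X (insert (.disj φ ψ) Γ, Δ) → STH X (insert φ Γ, Δ)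
  | orLinv₂ {Γ Δ φ ψ} : STH X (insert (.disj φ ψ) Γ, Δ) → STH X (insert ψ Γ, Δ)
  | negL {Γ Δ φ} : STH X (Γ, insert φ Δ) → STH X (insert (.neg φ) Γ, Δ)
  | negLinv {Γ Δ φ} : STH X (insert (.neg φ) Γ, Δ) → STH X (Γ, insert φ Δ)
  | negR {Γ Δ φ} : STH X (insert φ Γ, Δ) → STH X (Γ, insert (.neg φ) Δ)
  | negRinv {Γ Δ φ} : STH X (Γ, insert (.neg φ) Δ) → STH X (insert φ Γ, Δ)
  | uwi {Γ Δ} {φ : HForm} {x : ℕ} (t : HTerm) : STH X (insert (φ.subst x t) Γ, Δ) →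
      STH X (insert (φ.subst x (.wAll x φ)) Γ, Δ)
  | ewi {Γ Δ} {φ : HForm} {x : ℕ} (t : HTerm) : STH X (Γ, insert (φ.subst x t) Δ) →
      STH X (Γ, insert (φ.subst x (.wEx x φ)) Δ)
  | ewe {Γ Δ} {φ : HForm} {x : ℕ} (t : HTerm) : STH X (insert (φ.subst x (.wEx x φ)) Γ, Δ) →
      STH X (insert (φ.subst x t) Γ, Δ)
  | uwe {Γ Δ} {φ : HForm} {x : ℕ} (t : HTerm) : STH X (Γ, insert (φ.subst x (.wAll x φ)) Δ) →
      STH X (Γ, insert (φ.subst x t) Δ)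
  | allLW {Γ Δ} {φ : HForm} {x : ℕ} : STH X (insert (φ.subst x (.wAll x φ)) Γ, Δ) →
      STH X (insert (.all x φ) Γ, Δ)
  | allLWinv {Γ Δ} {φ : HForm} {x : ℕ} : STH X (insert (.all x φ) Γ, Δ) →
      STH X (insert (φ.subst x (.wAll x φ)) Γ, Δ)
  | allRW {Γ Δ} {φ : HForm} {x : ℕ} : STH X (Γ, insert (φ.subst x (.wAll x φ)) Δ) →
      STH X (Γ, insert (.all x φ) Δ)
  | allRWinv {Γ Δ} {φ : HForm} {x : ℕ} : STH X (Γ, insert (.all x φ) Δ) →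
      STH X (Γ, insert (φ.subst x (.wAll x φ)) Δ)
  | exLW {Γ Δ} {φ : HForm} {x : ℕ} : STH X (insert (φ.subst x (.wEx x φ)) Γ, Δ) →
      STH X (insert (.ex x φ) Γ, Δ)
  | exLWinv {Γ Δ} {φ : HForm} {x : ℕ} : STH X (insert (.ex x φ) Γ, Δ) →
      STH X (insert (φ.subst x (.wEx x φ)) Γ, Δ)
  | exRW {Γ Δ} {φ : HForm} {x : ℕ} : STH X (Γ, insert (φ.subst x (.wEx x φ)) Δ) →
      STH X (Γ, insert (.ex x φ) Δ)
  | exRWinv {Γ Δ} {φ : HForm} {x : ℕ} : STH X (Γ, insert (.ex x φ) Δ) →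
      STH X (Γ, insert (φ.subst x (.wEx x φ)) Δ)

/-- An `ST^H`-theory: a set of sequents closed under derivability. -/
def IsTheory (T : Set HSeq) : Prop := ∀ S, STH T S → S ∈ T

/-- A prime theory: `Γ ▷ Δ ∈ T` with `Γ ∪ Δ ≠ ∅` implies `γ ▷ ∅ ∈ T` for some
`γ ∈ Γ` or `∅ ▷ δ ∈ T` for some `δ ∈ Δ`. -/
def IsPrime (T : Set HSeq) : Prop :=
  ∀ Γ Δ : Finset HForm, (Γ, Δ) ∈ T → (Γ ∪ Δ).Nonempty →
    (∃ γ ∈ Γ, (({γ} : Finset HForm), (∅ : Finset HForm)) ∈ T) ∨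
    (∃ δ ∈ Δ, ((∅ : Finset HForm), ({δ} : Finset HForm)) ∈ T)

lemma STH.weakenL {X : Set HSeq} {Γ Δ : Finset HForm} (Γ' : Finset HForm)
    (h : STH X (Γ, Δ)) : STH X (Γ ∪ Γ', Δ) := by
  induction Γ' using Finset.induction_on with
  | empty => simpa using h
  | insert _ _ hx ih => rw [Finset.union_insert]; exact ih.wl _

lemma STH.weakenR {X : Set HSeq} {Γ Δ : Finset HForm} (Δ' : Finset HForm)
    (h : STH X (Γ, Δ)) : STH X (Γ, Δ ∪ Δ') := by
  induction Δ' using Finset.induction_on with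
  | empty => simpa using h
  | insert _ _ hx ih => rw [Finset.union_insert]; exact ih.wr _

lemma STH.mono {X : Set HSeq} {Γ Δ Γ' Δ' : Finset HForm} (hΓ : Γ ⊆ Γ') (hΔ : Δ ⊆ Δ')
    (h : STH X (Γ, Δ)) : STH X (Γ', Δ') := by
  have := (h.weakenL Γ').weakenR Δ'
  rwa [Finset.union_eq_right.mpr hΓ, Finset.union_eq_right.mpr hΔ] at this

lemma squnion_aux (T : Set HSeq)
    (h : ∀ S₁ S₂ : HSeq, S₁.squnion S₂ ∈ T → S₁ ∈ T ∨ S₂ ∈ T) :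
    ∀ n (Γ Δ : Finset HForm), Γ.card + Δ.card ≤ n → (Γ, Δ) ∈ T → (Γ ∪ Δ).Nonempty →
    (∃ γ ∈ Γ, (({γ} : Finset HForm), (∅ : Finset HForm)) ∈ T) ∨
    (∃ δ ∈ Δ, ((∅ : Finset HForm), ({δ} : Finset HForm)) ∈ T) := by
  intro n
  induction n with
  | zero =>
    intro Γ Δ hc _ hne
    have : Γ = ∅ ∧ Δ = ∅ := by
      constructor <;> (rw [← Finset.card_eq_zero]; omega)
    simp [this.1, this.2] at hne
  | succ n ih =>
    intro Γ Δ hc hmem hne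
    obtain ⟨a, ha⟩ := hne
    rcases Finset.mem_union.mp ha with ha | ha
    · have hsq : HSeq.squnion ({a}, ∅) (Γ.erase a, Δ) ∈ T := by
        have : HSeq.squnion ({a}, ∅) (Γ.erase a, Δ) = (Γ, Δ) := by
          simp only [HSeq.squnion, Finset.empty_union, Finset.union_empty, Prod.mk.injEq, and_true, true_and]; ext b; by_cases hb : b = a <;> simp [hb, ha]
        rwa [this]
      rcases h _ _ hsq with h1 | h2
      · exact Or.inl ⟨a, ha, h1⟩
      · by_cases hne2 : (Γ.erase a ∪ Δ).Nonempty
        · have hcard : (Γ.erase a).card + Δ.card ≤ n := by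
            have := Finset.card_erase_of_mem ha
            have : 1 ≤ Γ.card := Finset.card_pos.mpr ⟨a, ha⟩
            rw [Finset.card_erase_of_mem ha]; omega
          rcases ih _ _ hcard h2 hne2 with ⟨γ', hγ', ht⟩ | r
          · exact Or.inl ⟨γ', Finset.mem_of_mem_erase hγ', ht⟩
          · exact Or.inr r
        · have he : Γ.erase a = ∅ ∧ Δ = ∅ := by
            rw [Finset.not_nonempty_iff_eq_empty, Finset.union_eq_empty] at hne2
            exact hne2
          have hΓ : Γ = {a} := by
            have := Finset.insert_erase ha
            rw [he.1] at this
            simp at this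
            exact this.symm
          exact Or.inl ⟨a, ha, by rwa [hΓ, he.2] at hmem⟩
    · have hsq : HSeq.squnion (∅, {a}) (Γ, Δ.erase a) ∈ T := by
        have : HSeq.squnion (∅, {a}) (Γ, Δ.erase a) = (Γ, Δ) := by
          simp only [HSeq.squnion, Finset.empty_union, Finset.union_empty, Prod.mk.injEq, and_true, true_and]; ext b; by_cases hb : b = a <;> simp [hb, ha]
        rwa [this]
      rcases h _ _ hsq with h1 | h2
      · exact Or.inr ⟨a, ha, h1⟩
      · by_cases hne2 : (Γ ∪ Δ.erase a).Nonempty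
        · have hcard : Γ.card + (Δ.erase a).card ≤ n := by
            have : 1 ≤ Δ.card := Finset.card_pos.mpr ⟨a, ha⟩
            rw [Finset.card_erase_of_mem ha]; omega
          rcases ih _ _ hcard h2 hne2 with l | ⟨δ', hδ', ht⟩
          · exact Or.inl l
          · exact Or.inr ⟨δ', Finset.mem_of_mem_erase hδ', ht⟩
        · have he : Γ = ∅ ∧ Δ.erase a = ∅ := by
            rw [Finset.not_nonempty_iff_eq_empty, Finset.union_eq_empty] at hne2
            exact hne2
          have hΔ : Δ = {a} := by
            have := Finset.insert_erase ha
            rw [he.2] at this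
            simp at this
            exact this.symm
          exact Or.inr ⟨a, ha, by rwa [hΔ, he.1] at hmem⟩

theorem prime_iff_squnion (T : Set HSeq) (hT : IsTheory T) :
    IsPrime T ↔ ∀ S₁ S₂ : HSeq, S₁.squnion S₂ ∈ T → S₁ ∈ T ∨ S₂ ∈ T := by
  constructor
  · intro hP S₁ S₂ hU
    obtain ⟨Γ₁, Δ₁⟩ := S₁
    obtain ⟨Γ₂, Δ₂⟩ := S₂
    by_cases hne : ((Γ₁ ∪ Γ₂) ∪ (Δ₁ ∪ Δ₂)).Nonempty
    · rcases hP _ _ hU hne with ⟨γ, hγ, h1⟩ | ⟨δ, hδ, h1⟩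
      · rcases Finset.mem_union.mp hγ with hm | hm
        · exact Or.inl (hT _ ((STH.hyp h1).mono (Finset.singleton_subset_iff.mpr hm)
            (Finset.empty_subset _)))
        · exact Or.inr (hT _ ((STH.hyp h1).mono (Finset.singleton_subset_iff.mpr hm)
            (Finset.empty_subset _)))
      · rcases Finset.mem_union.mp hδ with hm | hm
        · exact Or.inl (hT _ ((STH.hyp h1).mono (Finset.empty_subset _)
            (Finset.singleton_subset_iff.mpr hm)))
        · exact Or.inr (hT _ ((STH.hyp h1).mono (Finset.empty_subset _)
            (Finset.singleton_subset_iff.mpr hm)))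
    · rw [Finset.not_nonempty_iff_eq_empty] at hne
      simp only [Finset.union_eq_empty] at hne
      obtain ⟨⟨h1, h2⟩, h3, h4⟩ := hne
      left
      have : HSeq.squnion (Γ₁, Δ₁) (Γ₂, Δ₂) = (Γ₁, Δ₁) := by
        simp [HSeq.squnion, h1, h2, h3, h4]
      rwa [this] at hU
  · intro h Γ Δ hmem hne
    exact squnion_aux T h (Γ.card + Δ.card) Γ Δ le_rfl hmem hne
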